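/- arXiv:math/0505677 — 4 statements merged into one kernel-verified Lean document; each statement's English description precedes it below -/
import Mathlib

section
/- Let Q ⊆ ℝ^d be a polytope all of whose vertices have integer coordinates, contained in the box {x : |x_i| ≤ M for all i}. Let x* ∈ Q and δ > 0. Then for every positive integer k with k ≥ (d+1)M/δ, there exists a point x ∈ Q ∩ (1/k)ℤ^d with ‖x − x*‖_∞ ≤ δ. -/
open Finset


/-- Grid approximation in an integral polytope: every fine enough lattice
`(1/k)ℤ^d` contains a point of `Q` within `δ` (in sup norm) of any `x* ∈ Q`. -/
theorem integral_polytope_grid_approximation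
    (d : ℕ) (V : Finset (Fin d → ℝ))
    (hVint : ∀ v ∈ V, ∀ i, ∃ n : ℤ, v i = (n : ℝ))
    (M : ℝ)
    (hM : ∀ x ∈ convexHull ℝ (V : Set (Fin d → ℝ)), ∀ i, |x i| ≤ M)
    (xstar : Fin d → ℝ) (hx : xstar ∈ convexHull ℝ (V : Set (Fin d → ℝ)))
    (δ : ℝ) (hδ : 0 < δ)
    (k : ℕ) (hk : 0 < k) (hkbig : ((d : ℝ) + 1) * M / δ ≤ (k : ℝ)) :
    ∃ x ∈ convexHull ℝ (V : Set (Fin d → ℝ)),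
      (∀ i, ∃ n : ℤ, x i = (n : ℝ) / k) ∧ ‖x - xstar‖ ≤ δ := by
  classical
  have hkR : (0 : ℝ) < k := by exact_mod_cast hk
  have hx' := hx
  rw [convexHull_eq_union] at hx'
  simp only [Set.mem_iUnion] at hx'
  obtain ⟨t, hts, hai, hxt⟩ := hx'
  have htne : t.Nonempty := by
    rcases Finset.eq_empty_or_nonempty t with h | h
    · subst h; simp at hxt
    · exact h
  have hcard : (t.card : ℝ) ≤ (d : ℝ) + 1 := by
    have h := hai.card_le_finrank_succ
    rw [Fintype.card_coe] at h
    have h2 : Module.finrank ℝ ↥(vectorSpan ℝ (Set.range (Subtype.val : t → _)))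
        ≤ Module.finrank ℝ (Fin d → ℝ) := Submodule.finrank_le _
    rw [Module.finrank_fintype_fun_eq_card, Fintype.card_fin] at h2
    have : t.card ≤ d + 1 := le_trans h (by omega)
    exact_mod_cast this
  obtain ⟨w, hw0, hw1, hwx⟩ := Finset.mem_convexHull'.1 hxt
  set n : (Fin d → ℝ) → ℤ := fun v => ⌊(k : ℝ) * w v⌋ with hn
  have hnsum_le : ∑ v ∈ t, n v ≤ (k : ℤ) := by
    have h : ((∑ v ∈ t, n v : ℤ) : ℝ) ≤ (k : ℝ) := by
      push_cast
      calc ∑ v ∈ t, ((n v : ℤ) : ℝ) ≤ ∑ v ∈ t, (k : ℝ) * w v :=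
            Finset.sum_le_sum fun v _ => Int.floor_le _
        _ = k := by rw [← Finset.mul_sum, hw1, mul_one]
    exact_mod_cast h
  have hnsum_gt : (k : ℤ) - t.card < ∑ v ∈ t, n v := by
    have h : (k : ℝ) - t.card < ((∑ v ∈ t, n v : ℤ) : ℝ) := by
      push_cast
      have h2 : ∑ v ∈ t, ((k : ℝ) * w v - 1) < ∑ v ∈ t, ((n v : ℤ) : ℝ) :=
        Finset.sum_lt_sum_of_nonempty htne fun v _ => Int.sub_one_lt_floor _
      calc (k : ℝ) - t.card = ∑ v ∈ t, ((k : ℝ) * w v - 1) := by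
            rw [Finset.sum_sub_distrib, ← Finset.mul_sum, hw1, mul_one]; simp
        _ < _ := h2
    exact_mod_cast h
  set r : ℤ := (k : ℤ) - ∑ v ∈ t, n v with hr
  have hrcard : r.toNat ≤ t.card := by omega
  obtain ⟨S, hSt, hScard⟩ := Finset.exists_subset_card_eq hrcard
  set m : (Fin d → ℝ) → ℤ := fun v => n v + (if v ∈ S then 1 else 0) with hm
  have hm0 : ∀ v ∈ t, (0 : ℤ) ≤ m v := by
    intro v hv
    have h1 : (0 : ℤ) ≤ n v := Int.floor_nonneg.2 (mul_nonneg hkR.le (hw0 v hv))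
    simp only [hm]
    split <;> omega
  have hmsum : ∑ v ∈ t, m v = (k : ℤ) := by
    simp only [hm]
    rw [Finset.sum_add_distrib, Finset.sum_ite_mem,
      Finset.inter_eq_right.2 hSt, Finset.sum_const, hScard]
    simp only [nsmul_eq_mul, mul_one]
    omega
  have hdiff : ∀ v ∈ t, |(m v : ℝ) / k - w v| ≤ 1 / k := by
    intro v hv
    have h1 : (n v : ℝ) ≤ (k : ℝ) * w v := Int.floor_le _
    have h2 : (k : ℝ) * w v < (n v : ℝ) + 1 := Int.lt_floor_add_one _
    have hmv : (n v : ℝ) ≤ (m v : ℝ) ∧ (m v : ℝ) ≤ (n v : ℝ) + 1 := by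
      simp only [hm]; push_cast; split <;> constructor <;> linarith
    have habs : |(m v : ℝ) - (k : ℝ) * w v| ≤ 1 := by
      rw [abs_le]; constructor <;> linarith [hmv.1, hmv.2]
    have heq : (m v : ℝ) / k - w v = ((m v : ℝ) - (k : ℝ) * w v) / k := by
      field_simp
    rw [heq, abs_div, abs_of_pos hkR]
    gcongr
  -- the approximating point
  set x : Fin d → ℝ := ∑ v ∈ t, ((m v : ℝ) / k) • v with hxdef
  have hwsum' : ∑ v ∈ t, (m v : ℝ) / k = 1 := by
    rw [← Finset.sum_div]
    rw [div_eq_one_iff_eq (ne_of_gt hkR)]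
    exact_mod_cast hmsum
  have hxmem : x ∈ convexHull ℝ (V : Set (Fin d → ℝ)) := by
    apply convexHull_mono hts
    rw [Finset.mem_convexHull']
    exact ⟨fun v => (m v : ℝ) / k,
      fun v hv => div_nonneg (by exact_mod_cast hm0 v hv) hkR.le, hwsum', rfl⟩
  refine ⟨x, hxmem, ?_, ?_⟩
  · -- coordinates are in (1/k)ℤ
    intro i
    choose c hc using fun (v : Fin d → ℝ) (hv : v ∈ V) (i : Fin d) => hVint v hv i
    refine ⟨∑ v ∈ t.attach, m v * c v (hts v.2) i, ?_⟩
    have hxi : x i = ∑ v ∈ t, (m v : ℝ) / k * v i := by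
      simp [hxdef, Finset.sum_apply]
    rw [hxi, ← Finset.sum_attach t (fun v => (m v : ℝ) / k * v i)]
    push_cast
    rw [Finset.sum_div]
    refine Finset.sum_congr rfl fun v _ => ?_
    rw [← hc v (hts v.2) i]
    ring
  · -- norm bound
    rw [pi_norm_le_iff_of_nonneg hδ.le]
    intro i
    have hM0 : 0 ≤ M := le_trans (abs_nonneg _) (hM xstar hx i)
    have hxsi : xstar i = ∑ v ∈ t, w v * v i := by
      rw [← hwx]; simp [Finset.sum_apply]
    have hxi : x i = ∑ v ∈ t, (m v : ℝ) / k * v i := by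
      simp [hxdef, Finset.sum_apply]
    have key : (x - xstar) i = ∑ v ∈ t, ((m v : ℝ) / k - w v) * v i := by
      simp only [Pi.sub_apply, hxi, hxsi, ← Finset.sum_sub_distrib]
      exact Finset.sum_congr rfl fun v _ => by ring
    rw [Real.norm_eq_abs, key]
    calc |∑ v ∈ t, ((m v : ℝ) / k - w v) * v i|
        ≤ ∑ v ∈ t, |((m v : ℝ) / k - w v) * v i| := Finset.abs_sum_le_sum_abs _ _
      _ ≤ ∑ v ∈ t, (1 / k) * M := by
          refine Finset.sum_le_sum fun v hv => ?_
          rw [abs_mul]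
          have hvM : |v i| ≤ M := hM v (subset_convexHull ℝ _ (hts hv)) i
          exact mul_le_mul (hdiff v hv) hvM (abs_nonneg _) (by positivity)
      _ = (t.card : ℝ) * (1 / k * M) := by rw [Finset.sum_const, nsmul_eq_mul]
      _ ≤ ((d : ℝ) + 1) * (1 / k * M) := by
          apply mul_le_mul_of_nonneg_right hcard; positivity
      _ ≤ δ := by
          rw [div_le_iff₀ hδ] at hkbig
          rw [← mul_assoc, mul_one_div, div_mul_eq_mul_div, div_le_iff₀ hkR]
          linarith
end

section
/- Let f ∈ ℚ[x_1,…,x_d] have maximum total degree D, let x^0,…,x^{d'} ∈ ℤ^d be points such that x^1 − x^0, …, x^{d'} − x^0 are linearly independent, and let k ≥ D·d'. If f is constant on the set S_k = {x^0 + Σ_{i=1}^{d'} (n_i/k)(x^i − x^0) : n_i ∈ {0,…,D}}, then f is constant on the affine hull of {x^0,…,x^{d'}}. -/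
/-!
Restricting `f` to the affine parametrization `t ↦ x⁰ + ∑ tᵢ (xⁱ - x⁰)` gives a polynomial `g`
in `d'` variables of total degree at most `D`. The sample `S_k` is the image of the grid
`{0, 1/k, …, D/k}^{d'}`, which has `D + 1` values in each coordinate, so by the combinatorial
Nullstellensatz `g - c` vanishes identically. Every point of the affine hull is of the form
`x⁰ + ∑ tᵢ (xⁱ - x⁰)`, hence `f = c` there.
-/

namespace MvPolynomial

theorem totalDegree_aeval_le {σ τ R : Type*} [CommSemiring R] (φ : σ → MvPolynomial τ R)
    {n : ℕ} (hφ : ∀ i, (φ i).totalDegree ≤ n) (p : MvPolynomial σ R) :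
    (aeval φ p).totalDegree ≤ n * p.totalDegree := by
  conv_lhs => rw [p.as_sum, map_sum]
  refine totalDegree_finsetSum_le fun m hm => ?_
  rw [aeval_monomial, algebraMap_eq]
  calc (C (coeff m p) * m.prod fun i e => φ i ^ e).totalDegree
      ≤ (C (coeff m p)).totalDegree + (m.prod fun i e => φ i ^ e).totalDegree :=
        totalDegree_mul _ _
    _ ≤ ∑ i ∈ m.support, (φ i ^ m i).totalDegree := by
        rw [totalDegree_C, zero_add]; exact totalDegree_finsetProd _ _
    _ ≤ ∑ i ∈ m.support, n * m i := Finset.sum_le_sum fun i _ =>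
        (totalDegree_pow _ _).trans (by rw [mul_comm]; exact Nat.mul_le_mul_right _ (hφ i))
    _ = n * m.sum fun _ e => e := by rw [Finsupp.sum, Finset.mul_sum]
    _ ≤ n * p.totalDegree := Nat.mul_le_mul_left _ (le_totalDegree hm)

section AffineRestriction

variable {ι κ R : Type*} [CommSemiring R] [Fintype κ]

noncomputable def compAffine (f : MvPolynomial ι R) (a : ι → R) (v : κ → ι → R) :
    MvPolynomial κ R :=
  aeval (fun j => C (a j) + ∑ i, X i * C (v i j)) f

theorem eval_compAffine (f : MvPolynomial ι R) (a : ι → R) (v : κ → ι → R) (t : κ → R) :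
    eval t (f.compAffine a v) = eval (fun j => a j + ∑ i, t i * v i j) f := by
  rw [compAffine, aeval_def, eval₂_comp_left (eval t)]
  congr 1 <;> ext <;> simp

theorem totalDegree_compAffine_le (f : MvPolynomial ι R) (a : ι → R) (v : κ → ι → R) :
    (f.compAffine a v).totalDegree ≤ f.totalDegree := by
  refine (totalDegree_aeval_le _ (fun j => ?_) f).trans_eq (one_mul _)
  refine (totalDegree_add _ _).trans (max_le (by simp) (totalDegree_finsetSum_le fun i _ => ?_))
  refine (totalDegree_mul _ _).trans ?_
  rw [totalDegree_C, add_zero]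
  exact (totalDegree_monomial_le _ _).trans (by simp)

end AffineRestriction

theorem eq_C_of_eval_eq_on_grid {σ K : Type*} [Finite σ] [CommRing K] [IsDomain K]
    {g : MvPolynomial σ K} {D : ℕ} (hg : g.totalDegree ≤ D) (S : Finset K) (hS : D < S.card)
    (c : K) (heval : ∀ t : σ → K, (∀ i, t i ∈ S) → eval t g = c) : g = C c := by
  refine sub_eq_zero.1 (eq_zero_of_eval_zero_at_prod_finset _ (fun _ => S) (fun i => ?_) ?_)
  · exact ((degreeOf_le_totalDegree _ i).trans ((totalDegree_sub_C_le g c).trans hg)).trans_lt hS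
  · intro t ht
    rw [map_sub, eval_C, heval t ht, sub_self]

end MvPolynomial

theorem mem_affineSpan_range_fin_iff {k V P : Type*} [Ring k] [AddCommGroup V] [Module k V]
    [AddTorsor V P] {m : ℕ} (x : Fin (m + 1) → P) (p : P) :
    p ∈ affineSpan k (Set.range x) ↔
      ∃ t : Fin m → k, p = (∑ i, t i • (x i.succ -ᵥ x 0)) +ᵥ x 0 := by
  rw [← AffineSubspace.vsub_right_mem_direction_iff_mem
      (mem_affineSpan k (Set.mem_range_self 0)), direction_affineSpan,
    vectorSpan_range_eq_span_range_vsub_right k x 0, Submodule.mem_span_range_iff_exists_fun]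
  constructor
  · rintro ⟨t, ht⟩
    refine ⟨fun i => t i.succ, ?_⟩
    rw [(eq_vadd_iff_vsub_eq _ _ _).2 ht.symm, Fin.sum_univ_succ, vsub_self, smul_zero, zero_add]
  · rintro ⟨t, rfl⟩
    refine ⟨Fin.cons 0 t, ?_⟩
    simp [Fin.sum_univ_succ]

open MvPolynomial in
theorem constant_on_sample_constant_on_affine_hull_general
    (d d' D k : ℕ) (hkpos : 0 < k)
    (f : MvPolynomial (Fin d) ℚ) (hdeg : f.totalDegree ≤ D)
    (x : Fin (d' + 1) → Fin d → ℤ)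
    (c : ℚ)
    (hconst : ∀ n : Fin d' → ℕ, (∀ i, n i ≤ D) →
      eval (fun j => (x 0 j : ℚ) +
        ∑ i, ((n i : ℚ) / k) * ((x i.succ j : ℚ) - (x 0 j : ℚ))) f = c) :
    ∀ p ∈ affineSpan ℚ (Set.range fun i => (fun j => (x i j : ℚ))),
      eval p f = c := by
  set a : Fin d → ℚ := fun j => x 0 j
  set v : Fin d' → Fin d → ℚ := fun i j => x i.succ j - x 0 j
  have hinj : Function.Injective fun n : ℕ => (n : ℚ) / k := fun m n hmn => by
    simpa [div_left_inj' (Nat.cast_ne_zero.2 hkpos.ne' : (k : ℚ) ≠ 0)] using hmn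
  have hgrid : f.compAffine a v = C c := by
    refine eq_C_of_eval_eq_on_grid ((totalDegree_compAffine_le _ _ _).trans hdeg)
      ((Finset.range (D + 1)).image fun n : ℕ => (n : ℚ) / k)
      (by rw [Finset.card_image_of_injective _ hinj, Finset.card_range]; omega) c fun s hs => ?_
    choose n hnD hn using fun i => Finset.mem_image.1 (hs i)
    rw [eval_compAffine, ← funext hn]
    exact hconst n fun i => Nat.lt_succ_iff.1 (Finset.mem_range.1 (hnD i))
  intro p hp
  obtain ⟨t, rfl⟩ := (mem_affineSpan_range_fin_iff _ p).1 hp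
  have hpt : ∑ i, t i • ((fun j => (x i.succ j : ℚ)) -ᵥ a) +ᵥ a =
      fun j => a j + ∑ i, t i * v i j := by
    funext j
    simp [Finset.sum_apply, add_comm, a, v]
  rw [hpt, ← eval_compAffine, hgrid, eval_C]

open MvPolynomial in
/-- If a polynomial of total degree ≤ `D` is constant on the lattice sample
`S_k = {x^0 + Σ (n_i/k)(x^i − x^0) : n_i ∈ {0,…,D}}` for `k ≥ D·d'`, where the
`x^i − x^0` are linearly independent integer vectors, then it is constant on the
affine hull of `x^0, …, x^{d'}`. -/
theorem constant_on_sample_constant_on_affine_hull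
    (d d' D k : ℕ) (hk : D * d' ≤ k) (hkpos : 0 < k)
    (f : MvPolynomial (Fin d) ℚ) (hdeg : f.totalDegree ≤ D)
    (x : Fin (d' + 1) → Fin d → ℤ)
    (hli : LinearIndependent ℚ
      (fun i : Fin d' => (fun j => (x i.succ j : ℚ) - (x 0 j : ℚ))))
    (c : ℚ)
    (hconst : ∀ n : Fin d' → ℕ, (∀ i, n i ≤ D) →
      eval (fun j => (x 0 j : ℚ) +
        ∑ i, ((n i : ℚ) / k) * ((x i.succ j : ℚ) - (x 0 j : ℚ))) f = c) :
    ∀ p ∈ affineSpan ℚ (Set.range fun i => (fun j => (x i j : ℚ))),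
      eval p f = c :=
  constant_on_sample_constant_on_affine_hull_general d d' D k hkpos f hdeg x c hconst
end

section
/- Let f ∈ ℚ[x_1,…,x_d] have maximum total degree D, let Q ⊂ ℝ^d be a polytope of dimension d' ≤ d with all vertices in ℤ^d, and let k ≥ D·d'. Then f is constant on Q if and only if f is constant on Q ∩ (1/k)ℤ^d. -/
/-!
Fix a vertex `v` of `Q` and vectors `wᵢ = uᵢ - v` (`uᵢ` vertices) forming a basis of the
direction of `Q`. Pulled back along `t ↦ v + ∑ tᵢ wᵢ / k`, the polynomial `f - c` becomes a
polynomial of degree `≤ D` in `d'` variables. For `t ∈ {0,…,D}^d'` we have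
`∑ tᵢ / k ≤ D d' / k ≤ 1`, so the image point is a convex combination of vertices, i.e. a point
of `Q ∩ (1/k)ℤ^d`. The pull-back thus vanishes on the grid `{0,…,D}^d'` and is zero by the
combinatorial Nullstellensatz; since the map is onto the affine span of `Q`, `f = c` on `Q`.
-/

open Finset Module

namespace MvPolynomial

variable {σ τ R : Type*} [CommSemiring R]

theorem totalDegree_map_le {S : Type*} [CommSemiring S] (f : R →+* S) (p : MvPolynomial σ R) :
    (map f p).totalDegree ≤ p.totalDegree :=
  Finset.sup_mono (support_map_subset f p)

theorem totalDegree_bind₁_le {s : σ → MvPolynomial τ R} (hs : ∀ i, (s i).totalDegree ≤ 1)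
    (p : MvPolynomial σ R) : (bind₁ s p).totalDegree ≤ p.totalDegree := by
  conv_lhs => rw [p.as_sum, map_sum]
  refine (totalDegree_finsetSum _ _).trans (Finset.sup_le fun m hm => ?_)
  calc (bind₁ s (monomial m (p.coeff m))).totalDegree
      ≤ ∑ i ∈ m.support, (s i ^ m i).totalDegree := by
        rw [bind₁_monomial]
        refine (totalDegree_mul _ _).trans ?_
        rw [totalDegree_C, zero_add]
        exact totalDegree_finsetProd _ _
    _ ≤ ∑ i ∈ m.support, m i :=
        sum_le_sum fun i _ =>
          (totalDegree_pow _ _).trans (by simpa using Nat.mul_le_mul_left (m i) (hs i))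
    _ ≤ p.totalDegree := le_totalDegree hm

variable {ι K : Type*} [Fintype ι] [CommRing K]

theorem eval_bind₁_C_add_sum_C_mul_X (v : σ → K) (w : ι → σ → K) (p : MvPolynomial σ K)
    (r : ι → K) :
    eval r (bind₁ (fun j => C (v j) + ∑ i, C (w i j) * X i) p) = eval (v + ∑ i, r i • w i) p := by
  rw [eval, eval₂Hom_bind₁]
  change eval _ p = eval _ p
  congr 2
  funext j
  simp [mul_comm]

theorem eval_add_sum_smul_eq_zero_of_eval_grid_eq_zero [IsDomain K] [CharZero K] {D : ℕ}
    {p : MvPolynomial σ K} (hp : p.totalDegree ≤ D) (v : σ → K) (w : ι → σ → K)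
    (hgrid : ∀ t : ι → ℕ, (∀ i, t i ≤ D) → eval (v + ∑ i, (t i : K) • w i) p = 0)
    (r : ι → K) : eval (v + ∑ i, r i • w i) p = 0 := by
  classical
  set g := bind₁ (fun j => C (v j) + ∑ i, C (w i j) * X i) p
  have hg : g = 0 := by
    refine eq_zero_of_eval_zero_at_prod_finset g (fun _ => (range (D + 1)).image Nat.cast)
      (fun i => ?_) (fun x hx => ?_)
    · rw [card_image_of_injective _ Nat.cast_injective, card_range, Nat.lt_succ_iff]
      refine (degreeOf_le_totalDegree g i).trans ((totalDegree_bind₁_le (fun j => ?_) p).trans hp)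
      refine (totalDegree_add _ _).trans (max_le (by simp) ?_)
      refine (totalDegree_finsetSum _ _).trans (Finset.sup_le fun i _ => ?_)
      exact (totalDegree_mul _ _).trans (by simp [totalDegree_X])
    · choose t ht hx using fun i => mem_image.mp (hx i)
      rw [eval_bind₁_C_add_sum_C_mul_X, ← _root_.funext hx]
      exact hgrid t fun i => Nat.lt_succ_iff.mp (mem_range.mp (ht i))
  rw [← eval_bind₁_C_add_sum_C_mul_X]
  exact (congrArg (eval r) hg).trans (map_zero _)

end MvPolynomial

theorem Convex.add_sum_smul_mem {𝕜 E ι : Type*} [Field 𝕜] [LinearOrder 𝕜] [IsStrictOrderedRing 𝕜]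
    [AddCommGroup E] [Module 𝕜 E] [Fintype ι] {s : Set E} (hs : Convex 𝕜 s) {v : E} (hv : v ∈ s)
    {w : ι → E} (hw : ∀ i, v + w i ∈ s) {c : ι → 𝕜} (hc₀ : ∀ i, 0 ≤ c i)
    (hc₁ : ∑ i, c i ≤ 1) : v + ∑ i, c i • w i ∈ s := by
  have h := hs.sum_mem (t := univ) (w := fun o : Option ι => o.elim (1 - ∑ i, c i) c)
    (z := fun o => o.elim v (v + w ·)) (fun o _ => ?_) ?_ (fun o _ => ?_)
  · convert h using 1
    simp only [Fintype.sum_option, Option.elim, smul_add, sum_add_distrib, ← sum_smul, sub_smul,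
      one_smul]
    abel
  · cases o with
    | none => exact sub_nonneg.mpr hc₁
    | some i => exact hc₀ i
  · simp [Fintype.sum_option]
  · cases o with
    | none => exact hv
    | some i => exact hw i

theorem exists_int_eq_div_of_add_sum_smul {σ ι : Type*} [Fintype ι] {k : ℕ} (hk : k ≠ 0)
    {v : σ → ℝ} (hv : ∀ j, ∃ n : ℤ, v j = n) {w : ι → σ → ℝ} (hw : ∀ i j, ∃ n : ℤ, w i j = n)
    (t : ι → ℕ) (j : σ) : ∃ n : ℤ, (v + ∑ i, (t i : ℝ) • ((k : ℝ)⁻¹ • w i)) j = n / k := by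
  obtain ⟨a, ha⟩ := hv j
  choose b hb using fun i => hw i j
  refine ⟨k * a + ∑ i, t i * b i, ?_⟩
  simp only [Pi.add_apply, Finset.sum_apply, Pi.smul_apply, smul_eq_mul, ha, hb]
  push_cast
  rw [add_div, sum_div]
  congr 1
  · field_simp
  · exact sum_congr rfl fun i _ => by field_simp

open MvPolynomial

theorem eval_eq_zero_on_convexHull_of_eval_eq_zero_on_grid {σ : Type*} {V : Finset (σ → ℝ)}
    (hVint : ∀ v ∈ V, ∀ j, ∃ n : ℤ, v j = n) {D k : ℕ}
    (hk : D * finrank ℝ (vectorSpan ℝ (V : Set (σ → ℝ))) ≤ k) (hkpos : 0 < k)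
    {p : MvPolynomial σ ℝ} (hp : p.totalDegree ≤ D)
    (hgrid : ∀ x ∈ convexHull ℝ (V : Set (σ → ℝ)), (∀ j, ∃ n : ℤ, x j = n / k) → eval x p = 0) :
    ∀ x ∈ convexHull ℝ (V : Set (σ → ℝ)), eval x p = 0 := by
  intro x hx
  obtain ⟨v, hv⟩ := convexHull_nonempty_iff.mp ⟨x, hx⟩
  obtain ⟨b, hbV, hbspan, hbli⟩ := exists_linearIndependent ℝ ((· -ᵥ v) '' (V : Set (σ → ℝ)))
  have hb : ∀ u : b, v + u ∈ V := fun u => by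
    obtain ⟨y, hy, hyu⟩ := hbV u.2
    simpa [← hyu] using hy
  rw [← vectorSpan_eq_span_vsub_set_right ℝ hv] at hbspan
  have : Fintype b := ((V.finite_toSet.image _).subset hbV).fintype
  have hcard : Fintype.card b = finrank ℝ (vectorSpan ℝ (V : Set (σ → ℝ))) := by
    rw [← hbspan, ← finrank_span_eq_card hbli, Subtype.range_coe]
  obtain ⟨r, hr⟩ : ∃ r : b → ℝ, ∑ u, r u • (u : σ → ℝ) = x - v := by
    rw [← Submodule.mem_span_range_iff_exists_fun, Subtype.range_coe, hbspan]
    exact vsub_mem_vectorSpan_of_mem_affineSpan_of_mem_affineSpan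
      (convexHull_subset_affineSpan _ hx) (subset_affineSpan ℝ _ hv)
  have hsimplex_grid : ∀ t : b → ℕ, (∀ u, t u ≤ D) →
      eval (v + ∑ u, (t u : ℝ) • ((k : ℝ)⁻¹ • (u : σ → ℝ))) p = 0 := by
    intro t ht
    refine hgrid _ ?_ (exists_int_eq_div_of_add_sum_smul hkpos.ne' (hVint v hv) (fun u j => ?_) t)
    · simp_rw [smul_smul, ← div_eq_mul_inv]
      refine (convex_convexHull ℝ _).add_sum_smul_mem (subset_convexHull ℝ _ hv)
        (fun u => subset_convexHull ℝ _ (hb u)) (fun u => by positivity) ?_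
      rw [← sum_div, div_le_one (by positivity)]
      calc ∑ u, (t u : ℝ) ≤ ∑ _u : b, (D : ℝ) := sum_le_sum fun u _ => by exact_mod_cast ht u
        _ ≤ k := by simpa [hcard, mul_comm] using (Nat.cast_le (α := ℝ)).mpr hk
    · obtain ⟨m, hm⟩ := hVint _ (hb u) j
      obtain ⟨n, hn⟩ := hVint v hv j
      exact ⟨m - n, by push_cast [← hm, ← hn]; simp⟩
  have hk0 : (k : ℝ) ≠ 0 := by positivity
  have hx' : v + ∑ u, ((k : ℝ) * r u) • ((k : ℝ)⁻¹ • (u : σ → ℝ)) = x := by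
    simp_rw [smul_smul, mul_comm (k : ℝ), mul_assoc, mul_inv_cancel₀ hk0, mul_one, hr]
    abel
  rw [← hx']
  exact eval_add_sum_smul_eq_zero_of_eval_grid_eq_zero hp v _ hsimplex_grid _

open MvPolynomial in
theorem constant_on_polytope_iff_constant_on_grid_general
    (d d' D k : ℕ) (hk : D * d' ≤ k) (hkpos : 0 < k)
    (f : MvPolynomial (Fin d) ℚ) (hdeg : f.totalDegree ≤ D)
    (V : Finset (Fin d → ℝ))
    (hVint : ∀ v ∈ V, ∀ i, ∃ n : ℤ, v i = (n : ℝ))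
    (hdim : Module.finrank ℝ
      (affineSpan ℝ (convexHull ℝ (V : Set (Fin d → ℝ)))).direction = d') :
    (∃ c : ℝ, ∀ x ∈ convexHull ℝ (V : Set (Fin d → ℝ)), aeval x f = c) ↔
    (∃ c : ℝ, ∀ x ∈ convexHull ℝ (V : Set (Fin d → ℝ)),
      (∀ i, ∃ n : ℤ, x i = (n : ℝ) / k) → aeval x f = c) := by
  refine ⟨fun ⟨c, hc⟩ => ⟨c, fun x hx _ => hc x hx⟩, fun ⟨c, hc⟩ => ⟨c, fun x hx => ?_⟩⟩
  rw [affineSpan_convexHull, direction_affineSpan] at hdim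
  have hf : ∀ y, aeval y f - c = eval y (map (algebraMap ℚ ℝ) f - C c) := fun y => by
    rw [map_sub, eval_C, eval_map, aeval_def]
  rw [← sub_eq_zero, hf]
  refine eval_eq_zero_on_convexHull_of_eval_eq_zero_on_grid hVint (hdim ▸ hk) hkpos ?_
    (fun y hy hyk => ?_) x hx
  · exact (totalDegree_sub_C_le _ _).trans ((totalDegree_map_le _ f).trans hdeg)
  · rw [← hf, hc y hy hyk, sub_self]

open MvPolynomial in
/-- A rational polynomial of total degree ≤ `D` is constant on an integral
polytope `Q` of dimension `d'` iff it is constant on `Q ∩ (1/k)ℤ^d`, for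
`k ≥ D·d'`. -/
theorem constant_on_polytope_iff_constant_on_grid
    (d d' D k : ℕ) (hk : D * d' ≤ k) (hkpos : 0 < k)
    (f : MvPolynomial (Fin d) ℚ) (hdeg : f.totalDegree ≤ D)
    (V : Finset (Fin d → ℝ)) (hV : V.Nonempty)
    (hVint : ∀ v ∈ V, ∀ i, ∃ n : ℤ, v i = (n : ℝ))
    (hdim : Module.finrank ℝ
      (affineSpan ℝ (convexHull ℝ (V : Set (Fin d → ℝ)))).direction = d') :
    (∃ c : ℝ, ∀ x ∈ convexHull ℝ (V : Set (Fin d → ℝ)), aeval x f = c) ↔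
    (∃ c : ℝ, ∀ x ∈ convexHull ℝ (V : Set (Fin d → ℝ)),
      (∀ i, ∃ n : ℤ, x i = (n : ℝ) / k) → aeval x f = c) :=
  constant_on_polytope_iff_constant_on_grid_general d d' D k hk hkpos f hdeg V hVint hdim
end

section
/- For the problem of maximizing f(x,z) = 2z − x over F_m = {(x,z) : z ≤ 2x, z ≤ 2(1−x), x ∈ (1/m)ℤ, x ≥ 0, z ∈ {0,1}}: if m is even, the unique maximizer is (1/2, 1) with value 3/2; if m is odd, the unique maximizer is (0,0) with value 0. -/
/-! The constraints `z ≤ 2x`, `z ≤ 2(1 − x)` leave `z = 1` feasible only at `x = 1/2`, a point of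
`(1/m)ℤ` exactly when `m` is even. Otherwise every feasible point has `z = 0`, where `2z − x = −x`
is maximised only at `x = 0`. -/

theorem eq_zero_or_eq_half_one_of_le {x : ℝ} {z : ℤ} (h₁ : (z : ℝ) ≤ 2 * x)
    (h₂ : (z : ℝ) ≤ 2 * (1 - x)) (hz : z = 0 ∨ z = 1) : z = 0 ∨ (x = 1 / 2 ∧ z = 1) := by
  rcases hz with rfl | rfl
  · exact Or.inl rfl
  · push_cast at h₁ h₂
    exact Or.inr ⟨by linarith, rfl⟩

theorem exists_int_half_eq_div_iff_even {m : ℕ} (hm : m ≠ 0) :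
    (∃ n : ℤ, (1 / 2 : ℝ) = n / m) ↔ Even m := by
  have hm' : (m : ℝ) ≠ 0 := Nat.cast_ne_zero.2 hm
  constructor
  · rintro ⟨n, hn⟩
    have h : (m : ℝ) = 2 * n := by
      field_simp at hn
      linarith
    have h' : (m : ℤ) = 2 * n := by exact_mod_cast h
    exact (Int.even_coe_nat m).1 ⟨n, by omega⟩
  · rintro ⟨k, rfl⟩
    have hk : (k : ℝ) ≠ 0 := by exact_mod_cast (by omega : k ≠ 0)
    refine ⟨k, ?_⟩
    push_cast
    field_simp
    ring

/-- Grid approximations of the example: for even `m` the unique maximizer of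
`2z − x` over `F_m` is `(1/2,1)` (value `3/2`); for odd `m` it is `(0,0)`
(value `0`). -/
theorem example_grid_maximizers
    (m : ℕ) (hm : 0 < m) (Fm : Set (ℝ × ℤ))
    (hFm : Fm = {p : ℝ × ℤ | (p.2 : ℝ) ≤ 2 * p.1 ∧ (p.2 : ℝ) ≤ 2 * (1 - p.1) ∧
      (∃ n : ℤ, p.1 = (n : ℝ) / m) ∧ 0 ≤ p.1 ∧ (p.2 = 0 ∨ p.2 = 1)}) :
    (Even m →
      ((1 / 2, 1) ∈ Fm ∧ 2 * ((1 : ℤ) : ℝ) - 1 / 2 = 3 / 2 ∧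
        ∀ q ∈ Fm, q ≠ ((1 : ℝ) / 2, (1 : ℤ)) →
          2 * (q.2 : ℝ) - q.1 < 3 / 2)) ∧
    (Odd m →
      ((0, 0) ∈ Fm ∧
        ∀ q ∈ Fm, q ≠ ((0 : ℝ), (0 : ℤ)) → 2 * (q.2 : ℝ) - q.1 < 0)) := by
  subst hFm
  constructor
  · intro hm_even
    refine ⟨⟨by norm_num, by norm_num, (exists_int_half_eq_div_iff_even hm.ne').2 hm_even,
      by norm_num, Or.inr rfl⟩, by norm_num, ?_⟩
    rintro ⟨x, z⟩ ⟨h₁, h₂, -, hx, hz⟩ hne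
    rcases eq_zero_or_eq_half_one_of_le h₁ h₂ hz with rfl | ⟨rfl, rfl⟩
    · push_cast
      linarith
    · exact absurd rfl hne
  · intro hm_odd
    refine ⟨⟨by norm_num, by norm_num, ⟨0, by simp⟩, le_rfl, Or.inl rfl⟩, ?_⟩
    rintro ⟨x, z⟩ ⟨h₁, h₂, hgrid, hx, hz⟩ hne
    rcases eq_zero_or_eq_half_one_of_le h₁ h₂ hz with rfl | ⟨rfl, rfl⟩
    · have hx_pos : 0 < x := hx.lt_of_ne (by rintro rfl; exact hne rfl)
      push_cast
      linarith
    · exact absurd ((exists_int_half_eq_div_iff_even hm.ne').1 hgrid)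
        (Nat.not_even_iff_odd.2 hm_odd)
end
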